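/- arXiv:2211.07253 — 4 statements merged into one kernel-verified Lean document; each statement's English description precedes it below -/
import Mathlib

section
/- Let θ = (θ_i)_{i∈ℕ} be a sequence of positive reals with Σ_i θ_i² < ∞, and for ε > 0 set γ_θ(ε) = Σ_{i : θ_i > ε} θ_i (a finite, positive sum, assuming at least one θ_i > ε). Let (ξ_i)_{i∈ℕ} be independent random variables, ξ_i exponentially distributed with rate θ_i, and for s ≥ 0 define A_ε(s) = Σ_{i : θ_i > ε} θ_i · min(s, ξ_i). Then for every t > 0, E[ sup_{0 ≤ s ≤ t} | A_ε(s)/γ_θ(ε) − s | ] ≤ (Σ_i θ_i²) · t² / γ_θ(ε). -/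
/-!
Since `min s ξ_i ≤ s`, the deviation `|A_ε(s)/γ − s|` equals `(1/γ) Σ θ_i (s − ξ_i)⁺`, which is
nondecreasing in `s`, so the supremum over `[0, t]` is its value at `t`. Each exponential satisfies
`E (t − ξ_i)⁺ ≤ t P(ξ_i ≤ t) = t (1 − e^{−θ_i t}) ≤ θ_i t²`, and summing over the finitely many
`θ_i > ε` gives the bound.
-/

open MeasureTheory

lemma finite_setOf_lt_of_summable_sq {ι : Type*} {θ : ι → ℝ} (hsq : Summable fun i => θ i ^ 2)
    {ε : ℝ} (hε : 0 < ε) : {i | ε < θ i}.Finite := by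
  have hsmall : ∀ᶠ i in Filter.cofinite, θ i ^ 2 < ε ^ 2 :=
    hsq.tendsto_cofinite_zero.eventually (gt_mem_nhds (by positivity))
  refine (Filter.eventually_cofinite.1 hsmall).subset fun i (hi : ε < θ i) => ?_
  simpa using (pow_lt_pow_left₀ hi hε.le two_ne_zero).le

lemma tsum_ite_eq_finset_sum {ι M : Type*} [AddCommMonoid M] [TopologicalSpace M]
    {p : ι → Prop} [DecidablePred p] {G : Finset ι} (hG : ∀ i, i ∈ G ↔ p i) (f : ι → M) :
    ∑' i, (if p i then f i else 0) = ∑ i ∈ G, f i := by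
  rw [tsum_eq_sum (s := G) fun i hi => if_neg (mt (hG i).2 hi)]
  exact Finset.sum_congr rfl fun i hi => if_pos ((hG i).1 hi)

lemma ciSup_Icc_eq_of_monotoneOn {α β : Type*} [Preorder α] [ConditionallyCompleteLattice β]
    {f : α → β} {a b : α} (hab : a ≤ b) (hf : MonotoneOn f (Set.Icc a b)) :
    ⨆ s : Set.Icc a b, f s = f b := by
  have hb : b ∈ Set.Icc a b := ⟨hab, le_rfl⟩
  have hle : ∀ s : Set.Icc a b, f s ≤ f b := fun s => hf s.2 hb s.2.2
  have : Nonempty (Set.Icc a b) := ⟨⟨b, hb⟩⟩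
  exact le_antisymm (ciSup_le hle) (le_ciSup ⟨f b, Set.forall_mem_range.2 hle⟩ ⟨b, hb⟩)

section WeightedMin

variable {ι : Type*} (G : Finset ι) {w : ι → ℝ} (x : ι → ℝ)

lemma abs_sum_mul_min_div_sub (hw : ∀ i ∈ G, 0 ≤ w i) (hγ : 0 < ∑ i ∈ G, w i) (s : ℝ) :
    |(∑ i ∈ G, w i * min s (x i)) / (∑ i ∈ G, w i) - s|
      = (∑ i ∈ G, w i * max 0 (s - x i)) / ∑ i ∈ G, w i := by
  have hdiff : (∑ i ∈ G, w i * min s (x i)) / (∑ i ∈ G, w i) - s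
      = -((∑ i ∈ G, w i * max 0 (s - x i)) / ∑ i ∈ G, w i) := by
    have hsplit : ∑ i ∈ G, w i * min s (x i) + ∑ i ∈ G, w i * max 0 (s - x i)
        = s * ∑ i ∈ G, w i := by
      rw [← Finset.sum_add_distrib, Finset.mul_sum]
      refine Finset.sum_congr rfl fun i _ => ?_
      rw [← sub_self s, max_sub_sub_left]
      ring
    field_simp
    linarith
  rw [hdiff, abs_neg, abs_of_nonneg]
  exact div_nonneg (Finset.sum_nonneg fun i hi => mul_nonneg (hw i hi) (le_max_left _ _)) hγ.le

lemma iSup_Icc_abs_sum_mul_min_div_sub (hw : ∀ i ∈ G, 0 ≤ w i) (hγ : 0 < ∑ i ∈ G, w i)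
    {t : ℝ} (ht : 0 ≤ t) :
    ⨆ s : Set.Icc (0 : ℝ) t, |(∑ i ∈ G, w i * min (s : ℝ) (x i)) / (∑ i ∈ G, w i) - s|
      = (∑ i ∈ G, w i * max 0 (t - x i)) / ∑ i ∈ G, w i := by
  rw [ciSup_Icc_eq_of_monotoneOn
      (f := fun s => |(∑ i ∈ G, w i * min s (x i)) / (∑ i ∈ G, w i) - s|) ht,
    abs_sum_mul_min_div_sub G x hw hγ]
  intro s _ s' _ hss'
  simp only [abs_sum_mul_min_div_sub G x hw hγ]
  gcongr with i hi
  exact hw i hi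

end WeightedMin

section ExponentialTail

variable {Ω : Type*} [MeasurableSpace Ω] {P : Measure Ω} {X : Ω → ℝ} {t : ℝ}

lemma integrable_max_zero_sub [IsFiniteMeasure P] (hX : Measurable X) (hX0 : ∀ᵐ ω ∂P, 0 ≤ X ω)
    (ht : 0 ≤ t) : Integrable (fun ω => max 0 (t - X ω)) P := by
  refine Integrable.of_bound (by fun_prop) t ?_
  filter_upwards [hX0] with ω hω
  rw [Real.norm_of_nonneg (le_max_left _ _)]
  exact max_le ht (by linarith)

lemma integral_max_zero_sub_le [IsFiniteMeasure P] (hX : Measurable X) (hX0 : ∀ᵐ ω ∂P, 0 ≤ X ω)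
    (ht : 0 ≤ t) : ∫ ω, max 0 (t - X ω) ∂P ≤ t * P.real {ω | X ω ≤ t} := by
  have hle : MeasurableSet {ω | X ω ≤ t} := measurableSet_le hX measurable_const
  rw [mul_comm, ← smul_eq_mul, ← integral_indicator_const t hle]
  refine integral_mono_of_nonneg (ae_of_all _ fun ω => le_max_left _ _)
    ((integrable_const t).indicator hle) ?_
  filter_upwards [hX0] with ω hω
  by_cases hωt : X ω ≤ t
  · rw [Set.indicator_of_mem (s := {ω | X ω ≤ t}) hωt]
    exact max_le ht (by linarith)
  · rw [Set.indicator_of_notMem (s := {ω | X ω ≤ t}) hωt]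
    exact max_le le_rfl (by linarith [not_le.1 hωt])

variable [IsProbabilityMeasure P] {θ : ℝ}

lemma ae_pos_of_exp_tail
    (hexp : ∀ s : ℝ, 0 ≤ s → P {ω | s < X ω} = ENNReal.ofReal (Real.exp (-(θ * s))))
    (hX : Measurable X) : ∀ᵐ ω ∂P, 0 < X ω := by
  rw [ae_iff_measure_eq (measurableSet_lt measurable_const hX).nullMeasurableSet, hexp 0 le_rfl]
  simp

lemma measureReal_setOf_le_le_mul_of_exp_tail
    (hexp : ∀ s : ℝ, 0 ≤ s → P {ω | s < X ω} = ENNReal.ofReal (Real.exp (-(θ * s))))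
    (hX : Measurable X) (ht : 0 ≤ t) :
    P.real {ω | X ω ≤ t} ≤ θ * t := by
  have hgt : MeasurableSet {ω | t < X ω} := measurableSet_lt measurable_const hX
  have hcompl : {ω | X ω ≤ t} = {ω | t < X ω}ᶜ := by ext; simp
  rw [hcompl, probReal_compl_eq_one_sub hgt, measureReal_def, hexp t ht,
    ENNReal.toReal_ofReal (Real.exp_nonneg _)]
  linarith [Real.add_one_le_exp (-(θ * t))]

lemma integral_max_zero_sub_le_of_exp_tail
    (hexp : ∀ s : ℝ, 0 ≤ s → P {ω | s < X ω} = ENNReal.ofReal (Real.exp (-(θ * s))))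
    (hX : Measurable X) (ht : 0 ≤ t) :
    ∫ ω, max 0 (t - X ω) ∂P ≤ θ * t ^ 2 := by
  have hX0 : ∀ᵐ ω ∂P, 0 ≤ X ω := (ae_pos_of_exp_tail hexp hX).mono fun _ h => h.le
  calc ∫ ω, max 0 (t - X ω) ∂P ≤ t * P.real {ω | X ω ≤ t} := integral_max_zero_sub_le hX hX0 ht
    _ ≤ t * (θ * t) := by gcongr; exact measureReal_setOf_le_le_mul_of_exp_tail hexp hX ht
    _ = θ * t ^ 2 := by ring

end ExponentialTail

theorem stmt9_general {Ω : Type*} [MeasurableSpace Ω] (P : Measure Ω) [IsProbabilityMeasure P]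
    (θ : ℕ → ℝ) (hpos : ∀ i, 0 < θ i)
    (hsq : Summable fun i => (θ i) ^ 2)
    (ξ : ℕ → Ω → ℝ) (hmeas : ∀ i, Measurable (ξ i))
    (hexp : ∀ i, ∀ s : ℝ, 0 ≤ s →
      P {ω | s < ξ i ω} = ENNReal.ofReal (Real.exp (-(θ i * s))))
    (ε : ℝ) (hε : 0 < ε) (hsome : ∃ i, ε < θ i) (t : ℝ) (ht : 0 < t) :
    (∫ ω, (⨆ s : Set.Icc (0 : ℝ) t,
        |(∑' i, if ε < θ i then θ i * min (s : ℝ) (ξ i ω) else 0) /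
            (∑' i, if ε < θ i then θ i else 0) - (s : ℝ)|) ∂P)
      ≤ (∑' i, (θ i) ^ 2) * t ^ 2 / (∑' i, if ε < θ i then θ i else 0) := by
  obtain ⟨G, hG⟩ : ∃ G : Finset ℕ, ∀ i, i ∈ G ↔ ε < θ i :=
    ⟨_, fun _ => (finite_setOf_lt_of_summable_sq hsq hε).mem_toFinset⟩
  have hw : ∀ i ∈ G, 0 ≤ θ i := fun i _ => (hpos i).le
  have hγ : 0 < ∑ i ∈ G, θ i := by
    obtain ⟨i, hi⟩ := hsome
    exact Finset.sum_pos' hw ⟨i, (hG i).2 hi, hpos i⟩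
  simp only [tsum_ite_eq_finset_sum hG, iSup_Icc_abs_sum_mul_min_div_sub G _ hw hγ ht.le]
  have hint : ∀ i ∈ G, Integrable (fun ω => θ i * max 0 (t - ξ i ω)) P := fun i _ =>
    (integrable_max_zero_sub (hmeas i)
      ((ae_pos_of_exp_tail (hexp i) (hmeas i)).mono fun _ h => h.le) ht.le).const_mul _
  rw [integral_div, integral_finsetSum G hint]
  gcongr
  calc ∑ i ∈ G, ∫ ω, θ i * max 0 (t - ξ i ω) ∂P ≤ ∑ i ∈ G, θ i * (θ i * t ^ 2) := by
        gcongr with i hi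
        rw [integral_const_mul]
        exact mul_le_mul_of_nonneg_left
          (integral_max_zero_sub_le_of_exp_tail (hexp i) (hmeas i) ht.le) (hw i hi)
    _ = (∑ i ∈ G, θ i ^ 2) * t ^ 2 := by
        rw [Finset.sum_mul]
        exact Finset.sum_congr rfl fun i _ => by ring
    _ ≤ (∑' i, θ i ^ 2) * t ^ 2 := by
        gcongr
        exact hsq.sum_le_tsum G fun i _ => sq_nonneg _

/-- With `θ` positive, `Σ θ_i² < ∞`, `ξ_i` independent exponentials of rates `θ_i`,
`A_ε(s) = Σ_{θ_i > ε} θ_i min(s, ξ_i)` and `γ_θ(ε) = Σ_{θ_i > ε} θ_i > 0`, one has for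
every `t > 0`: `E[sup_{0 ≤ s ≤ t} |A_ε(s)/γ_θ(ε) − s|] ≤ (Σ_i θ_i²) t² / γ_θ(ε)`. -/
theorem stmt9 {Ω : Type*} [MeasurableSpace Ω] (P : Measure Ω) [IsProbabilityMeasure P]
    (θ : ℕ → ℝ) (hpos : ∀ i, 0 < θ i)
    (hsq : Summable fun i => (θ i) ^ 2)
    (ξ : ℕ → Ω → ℝ) (hmeas : ∀ i, Measurable (ξ i))
    (hindep : ProbabilityTheory.iIndepFun ξ P)
    (hexp : ∀ i, ∀ s : ℝ, 0 ≤ s →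
      P {ω | s < ξ i ω} = ENNReal.ofReal (Real.exp (-(θ i * s))))
    (ε : ℝ) (hε : 0 < ε) (hsome : ∃ i, ε < θ i) (t : ℝ) (ht : 0 < t) :
    (∫ ω, (⨆ s : Set.Icc (0 : ℝ) t,
        |(∑' i, if ε < θ i then θ i * min (s : ℝ) (ξ i ω) else 0) /
            (∑' i, if ε < θ i then θ i else 0) - (s : ℝ)|) ∂P)
      ≤ (∑' i, (θ i) ^ 2) * t ^ 2 / (∑' i, if ε < θ i then θ i else 0) :=
  stmt9_general P θ hpos hsq ξ hmeas hexp ε hε hsome t ht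
end

section
/- Let x_n, x : [0,1] → ℝ be càdlàg functions with x_n → x in the Skorokhod sense, and let b ∈ (0,1) and b_n ∈ [0,1) with b_n → b. Assume that either x is continuous at b, or Δx(b) ≠ 0 and Δx_n(b_n) → Δx(b). Then the functions y_n(t) = x_n(b_n + (1−b_n)t) − x_n(b_n) converge in the Skorokhod sense to y(t) = x(b + (1−b)t) − x(b), as functions of t ∈ [0,1]. -/
/-!
Write `x n ≈ y ∘ λ n` with time changes `λ n → id`. Conjugating `λ n` by the affine maps of
`[0,1]` onto `[bn n, 1]` and onto `[b, 1]` gives maps `g n → id` under which the rescaled paths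
match, except that `g n 0 = (λ n (bn n) - b) / (1 - b)` need not vanish. Making `g n` linear on a
short interval `[0, r n]` repairs this; on that interval both rescaled paths are small, because
`y ∘ λ n` stays uniformly close to `y b` just to the right of `bn n`. When `y` is continuous at `b`
this is immediate. Otherwise the jumps of `y` at points near, but other than, `b` are small, so the
jump of `x n` at `bn n` can only approach `jump y b ≠ 0` if `λ n (bn n) = b`; right-continuity of
`y` at `b` then suffices.
-/

open Filter Topology

/-- Left-limit value of a path on `[0,1]`, with the convention `x(0−) = x(0)`. -/
noncomputable def leftVal (x : ℝ → ℝ) (t : ℝ) : ℝ :=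
  if t ≤ 0 then x 0 else limUnder (nhdsWithin t (Set.Iio t)) x

/-- Jump `Δx(t) = x(t) − x(t−)`, with `Δx(0) = 0`. -/
noncomputable def jump (x : ℝ → ℝ) (t : ℝ) : ℝ :=
  if t ≤ 0 then 0 else x t - leftVal x t

/-- `x : [0,1] → ℝ` is càdlàg: right-continuous on `[0,1)`, left limits on `(0,1]`. -/
def Cadlag (x : ℝ → ℝ) : Prop :=
  (∀ t ∈ Set.Ico (0 : ℝ) 1, ContinuousWithinAt x (Set.Ici t) t) ∧
  (∀ t ∈ Set.Ioc (0 : ℝ) 1, ∃ L, Filter.Tendsto x (nhdsWithin t (Set.Iio t)) (nhds L))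

/-- `x n → y` in the Skorokhod sense on `[0,1]`: there are continuous strictly increasing
bijections `λ_n` of `[0,1]` with `sup |λ_n − id| → 0` and `sup |x n − y ∘ λ_n| → 0`. -/
def SkorokhodTendsto (x : ℕ → ℝ → ℝ) (y : ℝ → ℝ) : Prop :=
  ∃ lam : ℕ → ℝ → ℝ,
    (∀ n, ContinuousOn (lam n) (Set.Icc 0 1) ∧ StrictMonoOn (lam n) (Set.Icc 0 1) ∧
      lam n 0 = 0 ∧ lam n 1 = 1 ∧
      Set.MapsTo (lam n) (Set.Icc 0 1) (Set.Icc 0 1) ∧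
      Set.SurjOn (lam n) (Set.Icc 0 1) (Set.Icc 0 1)) ∧
    Filter.Tendsto (fun n => ⨆ t : Set.Icc (0 : ℝ) 1, |lam n (t : ℝ) - (t : ℝ)|)
      Filter.atTop (nhds 0) ∧
    Filter.Tendsto (fun n => ⨆ t : Set.Icc (0 : ℝ) 1, |x n (t : ℝ) - y (lam n (t : ℝ))|)
      Filter.atTop (nhds 0)

open Set

structure IsTimeChange (l : ℝ → ℝ) : Prop where
  continuousOn : ContinuousOn l (Icc 0 1)
  strictMonoOn : StrictMonoOn l (Icc 0 1)
  map_zero : l 0 = 0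
  map_one : l 1 = 1

namespace IsTimeChange

variable {l : ℝ → ℝ}

theorem mapsTo (hl : IsTimeChange l) : MapsTo l (Icc 0 1) (Icc 0 1) := fun _ ht =>
  ⟨hl.map_zero ▸ hl.strictMonoOn.monotoneOn (left_mem_Icc.2 zero_le_one) ht ht.1,
    hl.map_one ▸ hl.strictMonoOn.monotoneOn ht (right_mem_Icc.2 zero_le_one) ht.2⟩

theorem surjOn (hl : IsTimeChange l) : SurjOn l (Icc 0 1) (Icc 0 1) := by
  have h := intermediate_value_Icc zero_le_one hl.continuousOn
  rwa [hl.map_zero, hl.map_one] at h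

theorem tendsto_nhdsLT (hl : IsTimeChange l) {t : ℝ} (ht : t ∈ Ioc 0 1) :
    Tendsto l (𝓝[<] t) (𝓝[<] (l t)) := by
  have hI : Icc (0 : ℝ) 1 ∈ 𝓝[<] t :=
    mem_of_superset (Ioo_mem_nhdsLT ht.1) fun u hu => ⟨hu.1.le, hu.2.le.trans ht.2⟩
  refine tendsto_nhdsWithin_iff.2 ⟨?_, ?_⟩
  · exact (hl.continuousOn t ⟨ht.1.le, ht.2⟩).mono_of_mem_nhdsWithin hI
  · filter_upwards [self_mem_nhdsWithin, hI] with u hut hu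
    exact hl.strictMonoOn hu ⟨ht.1.le, ht.2⟩ hut

end IsTimeChange

theorem isTimeChange_iff {l : ℝ → ℝ} : IsTimeChange l ↔ ContinuousOn l (Icc 0 1) ∧
    StrictMonoOn l (Icc 0 1) ∧ l 0 = 0 ∧ l 1 = 1 ∧ MapsTo l (Icc 0 1) (Icc 0 1) ∧
    SurjOn l (Icc 0 1) (Icc 0 1) :=
  ⟨fun hl => ⟨hl.continuousOn, hl.strictMonoOn, hl.map_zero, hl.map_one, hl.mapsTo, hl.surjOn⟩,
    fun ⟨hc, hm, h0, h1, _⟩ => ⟨hc, hm, h0, h1⟩⟩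

theorem isTimeChange_id : IsTimeChange id := ⟨continuousOn_id, strictMonoOn_id, rfl, rfl⟩

namespace Cadlag

variable {f : ℝ → ℝ}

theorem tendsto_leftVal (hf : Cadlag f) {t : ℝ} (ht : t ∈ Ioc 0 1) :
    Tendsto f (𝓝[<] t) (𝓝 (leftVal f t)) := by
  obtain ⟨L, hL⟩ := hf.2 t ht
  rwa [leftVal, if_neg (not_le.2 ht.1), hL.limUnder_eq]

theorem eventually_abs_le (hf : Cadlag f) {c : ℝ} (hc : c ∈ Icc (0 : ℝ) 1) :
    ∃ M, ∀ᶠ u in 𝓝[Icc 0 1] c, |f u| ≤ M := by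
  have hsplit : 𝓝[Icc 0 1] c = 𝓝[Icc 0 1 ∩ Iio c] c ⊔ 𝓝[Icc 0 1 ∩ Ici c] c := by
    rw [← nhdsWithin_union, ← inter_union_distrib_left, Iio_union_Ici, inter_univ]
  have hleft : ∃ M, ∀ᶠ u in 𝓝[Icc 0 1 ∩ Iio c] c, |f u| ≤ M := by
    rcases hc.1.eq_or_lt with rfl | hc0
    · refine ⟨0, ?_⟩
      rw [show Icc (0 : ℝ) 1 ∩ Iio 0 = ∅ from
        eq_empty_of_forall_notMem fun u hu => absurd hu.2 (not_lt.2 hu.1.1), nhdsWithin_empty]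
      exact eventually_bot
    · obtain ⟨M, hM⟩ := (hf.tendsto_leftVal ⟨hc0, hc.2⟩).abs.isBoundedUnder_le
      exact ⟨M, nhdsWithin_mono _ inter_subset_right hM⟩
  have hright : ∃ M, ∀ᶠ u in 𝓝[Icc 0 1 ∩ Ici c] c, |f u| ≤ M := by
    rcases hc.2.eq_or_lt with rfl | hc1
    · refine ⟨|f 1|, nhdsWithin_mono _ (t := {1}) (fun u hu => le_antisymm hu.1.2 hu.2) ?_⟩
      rw [nhdsWithin_singleton]
      exact le_refl |f 1|
    · obtain ⟨M, hM⟩ := (hf.1 c ⟨hc.1, hc1⟩).tendsto.abs.isBoundedUnder_le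
      exact ⟨M, nhdsWithin_mono _ inter_subset_right hM⟩
  obtain ⟨M₁, hM₁⟩ := hleft
  obtain ⟨M₂, hM₂⟩ := hright
  refine ⟨max M₁ M₂, ?_⟩
  rw [hsplit, eventually_sup]
  exact ⟨hM₁.mono fun u hu => hu.trans (le_max_left _ _),
    hM₂.mono fun u hu => hu.trans (le_max_right _ _)⟩

theorem exists_abs_le (hf : Cadlag f) : ∃ M, ∀ t ∈ Icc (0 : ℝ) 1, |f t| ≤ M := by
  refine isCompact_Icc.induction_on (p := fun s => ∃ M, ∀ t ∈ s, |f t| ≤ M)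
    ⟨0, fun _ => False.elim⟩ (fun s _ hst ⟨M, hM⟩ => ⟨M, fun u hu => hM u (hst hu)⟩)
    (fun s t ⟨M₁, hM₁⟩ ⟨M₂, hM₂⟩ => ⟨max M₁ M₂, fun u hu => hu.elim
      (fun h => (hM₁ u h).trans (le_max_left _ _)) (fun h => (hM₂ u h).trans (le_max_right _ _))⟩)
    fun c hc => ?_
  obtain ⟨M, hM⟩ := hf.eventually_abs_le hc
  exact ⟨_, hM, M, fun u hu => hu⟩

theorem abs_jump_le (hf : Cadlag f) {s a c r : ℝ} (hs : s ∈ Ioc 0 1) (has : a < s)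
    (h : ∀ u ∈ Ioc a s, dist (f u) c ≤ r) : |jump f s| ≤ 2 * r := by
  have hL : dist (leftVal f s) c ≤ r :=
    le_of_tendsto ((hf.tendsto_leftVal hs).dist tendsto_const_nhds)
      (by filter_upwards [Ioo_mem_nhdsLT has] with u hu using h u ⟨hu.1, hu.2.le⟩)
  rw [jump, if_neg (not_le.2 hs.1), ← Real.dist_eq]
  linarith [dist_triangle_right (f s) (leftVal f s) c, h s ⟨has, le_rfl⟩]

theorem eventually_abs_jump_le (hf : Cadlag f) {b : ℝ} (hb : b ∈ Ioo (0 : ℝ) 1) {ε : ℝ}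
    (hε : 0 < ε) : ∀ᶠ s in 𝓝[≠] b, |jump f s| ≤ ε := by
  have hε2 : 0 < ε / 2 := half_pos hε
  have hjump_le {a s c : ℝ} (hs : s ∈ Ioc 0 1) (has : a < s)
      (h : ∀ u ∈ Ioc a s, dist (f u) c ≤ ε / 2) : |jump f s| ≤ ε := by
    simpa [mul_div_cancel₀] using hf.abs_jump_le hs has h
  rw [← nhdsLT_sup_nhdsGT, eventually_sup]
  constructor
  · obtain ⟨a, ha, hsub⟩ := mem_nhdsLT_iff_exists_Ioo_subset.1
      ((hf.tendsto_leftVal ⟨hb.1, hb.2.le⟩).eventually (Metric.closedBall_mem_nhds _ hε2))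
    filter_upwards [Ioo_mem_nhdsLT (max_lt ha hb.1)] with s hs
    have has : a < s := (le_max_left _ _).trans_lt hs.1
    exact hjump_le ⟨(le_max_right _ _).trans_lt hs.1, hs.2.le.trans hb.2.le⟩ has
      fun u hu => hsub ⟨hu.1, hu.2.trans_lt hs.2⟩
  · obtain ⟨c, hc, hsub⟩ := mem_nhdsGE_iff_exists_Ico_subset.1
      ((hf.1 b ⟨hb.1.le, hb.2⟩).eventually (Metric.closedBall_mem_nhds _ hε2))
    filter_upwards [Ioo_mem_nhdsGT (lt_min hc hb.2)] with s hs
    exact hjump_le ⟨hb.1.trans hs.1, hs.2.le.trans (min_le_right _ _)⟩ hs.1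
      fun u hu => hsub ⟨hu.1.le, hu.2.trans_lt (hs.2.trans_le (min_le_left _ _))⟩

theorem eventually_eq_of_tendsto_jump (hf : Cadlag f) {b : ℝ} (hb : b ∈ Ioo (0 : ℝ) 1)
    (hΔ : jump f b ≠ 0) {α : Type*} {l : Filter α} {c : α → ℝ} (hc : Tendsto c l (𝓝 b))
    (hj : Tendsto (fun i => jump f (c i)) l (𝓝 (jump f b))) : ∀ᶠ i in l, c i = b := by
  have hΔ0 : 0 < |jump f b| := abs_pos.2 hΔ
  have hsmall := eventually_nhdsWithin_iff.1 (hf.eventually_abs_jump_le hb (half_pos hΔ0))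
  filter_upwards [hc.eventually hsmall, hj.abs.eventually (lt_mem_nhds (half_lt_self hΔ0))]
    with i hsmall hbig
  by_contra hne
  exact (hsmall hne).not_gt hbig

theorem abs_jump_sub_jump_comp_le {g l : ℝ → ℝ} (hf : Cadlag f) (hg : Cadlag g)
    (hl : IsTimeChange l) {E t : ℝ} (ht : t ∈ Ioc 0 1)
    (hE : ∀ u ∈ Icc (0 : ℝ) 1, |f u - g (l u)| ≤ E) : |jump f t - jump g (l t)| ≤ 2 * E := by
  have htI : t ∈ Icc (0 : ℝ) 1 := ⟨ht.1.le, ht.2⟩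
  have hlt : l t ∈ Ioc (0 : ℝ) 1 :=
    ⟨hl.map_zero ▸ hl.strictMonoOn (left_mem_Icc.2 zero_le_one) htI ht.1, (hl.mapsTo htI).2⟩
  have hleft : |leftVal f t - leftVal g (l t)| ≤ E :=
    le_of_tendsto
      ((hf.tendsto_leftVal ht).sub ((hg.tendsto_leftVal hlt).comp (hl.tendsto_nhdsLT ht))).abs
      (by filter_upwards [Ioo_mem_nhdsLT ht.1] with u hu using hE u ⟨hu.1.le, hu.2.le.trans ht.2⟩)
  rw [jump, jump, if_neg (not_le.2 ht.1), if_neg (not_le.2 hlt.1)]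
  calc _ = |(f t - g (l t)) - (leftVal f t - leftVal g (l t))| := by ring_nf
    _ ≤ |f t - g (l t)| + |leftVal f t - leftVal g (l t)| := abs_sub _ _
    _ ≤ 2 * E := by linarith [hE t htI]

end Cadlag

theorem tendsto_iSup_abs_of_eventually_le {α ι : Type*} {l : Filter α} {f : α → ι → ℝ}
    (h : ∀ ε > 0, ∀ᶠ a in l, ∀ i, |f a i| ≤ ε) :
    Tendsto (fun a => ⨆ i, |f a i|) l (𝓝 0) := by
  refine Metric.tendsto_nhds.2 fun ε hε => ?_
  filter_upwards [h (ε / 2) (half_pos hε)] with a ha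
  rw [Real.dist_0_eq_abs, abs_of_nonneg (Real.iSup_nonneg fun i => abs_nonneg _)]
  exact (Real.iSup_le ha (half_pos hε).le).trans_lt (half_lt_self hε)

theorem SkorokhodTendsto.of_eventually {x : ℕ → ℝ → ℝ} {y : ℝ → ℝ} (lam : ℕ → ℝ → ℝ)
    (hlam : ∀ᶠ n in atTop, IsTimeChange (lam n))
    (hid : ∀ ε > 0, ∀ᶠ n in atTop, ∀ t ∈ Icc (0 : ℝ) 1, |lam n t - t| ≤ ε)
    (hxy : ∀ ε > 0, ∀ᶠ n in atTop, ∀ t ∈ Icc (0 : ℝ) 1, |x n t - y (lam n t)| ≤ ε) :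
    SkorokhodTendsto x y := by
  classical
  obtain ⟨N, hN⟩ := eventually_atTop.1 hlam
  let lam' : ℕ → ℝ → ℝ := fun n => if N ≤ n then lam n else id
  have heq : ∀ᶠ n in atTop, lam' n = lam n := eventually_atTop.2 ⟨N, fun n hn => if_pos hn⟩
  refine ⟨lam', fun n => isTimeChange_iff.1 ?_, ?_, ?_⟩
  · by_cases hn : N ≤ n
    · simpa [lam', hn] using hN n hn
    · simpa [lam', hn] using isTimeChange_id
  · refine tendsto_iSup_abs_of_eventually_le fun ε hε => ?_
    filter_upwards [heq, hid ε hε] with n hn h t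
    exact hn ▸ h t t.2
  · refine tendsto_iSup_abs_of_eventually_le fun ε hε => ?_
    filter_upwards [heq, hxy ε hε] with n hn h t
    exact hn ▸ h t t.2

theorem SkorokhodTendsto.exists_le {x : ℕ → ℝ → ℝ} {y : ℝ → ℝ} (hx : ∀ n, Cadlag (x n))
    (hy : Cadlag y) (h : SkorokhodTendsto x y) :
    ∃ lam : ℕ → ℝ → ℝ, (∀ n, IsTimeChange (lam n)) ∧ ∃ e₁ e₂ : ℕ → ℝ,
      Tendsto e₁ atTop (𝓝 0) ∧ Tendsto e₂ atTop (𝓝 0) ∧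
      (∀ n, ∀ t ∈ Icc (0 : ℝ) 1, |lam n t - t| ≤ e₁ n) ∧
      ∀ n, ∀ t ∈ Icc (0 : ℝ) 1, |x n t - y (lam n t)| ≤ e₂ n := by
  obtain ⟨lam, hlam, h₁, h₂⟩ := h
  -- `⨆` over an unbounded family is the junk value `0`, hence the boundedness of càdlàg paths
  have hl n : IsTimeChange (lam n) := isTimeChange_iff.2 (hlam n)
  refine ⟨lam, hl, _, _, h₁, h₂, fun n t ht => ?_, fun n t ht => ?_⟩
  · refine le_ciSup (f := fun s : Icc (0 : ℝ) 1 => |lam n s - s|) ⟨1, ?_⟩ ⟨t, ht⟩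
    rintro _ ⟨s, rfl⟩
    have := (hl n).mapsTo s.2
    exact abs_sub_le_iff.2 ⟨by linarith [s.2.1, this.2], by linarith [s.2.2, this.1]⟩
  · obtain ⟨Mx, hMx⟩ := (hx n).exists_abs_le
    obtain ⟨My, hMy⟩ := hy.exists_abs_le
    refine le_ciSup (f := fun s : Icc (0 : ℝ) 1 => |x n s - y (lam n s)|) ⟨Mx + My, ?_⟩ ⟨t, ht⟩
    rintro _ ⟨s, rfl⟩
    exact (abs_sub _ _).trans (add_le_add (hMx s s.2) (hMy _ ((hl n).mapsTo s.2)))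

noncomputable def linearPatch (g : ℝ → ℝ) (r t : ℝ) : ℝ :=
  if t ≤ r then g r / r * t else g t

section linearPatch

variable {g : ℝ → ℝ} {r : ℝ}

theorem linearPatch_mem_Icc (hr : 0 < r) (hgr : 0 < g r) {t : ℝ} (ht : t ∈ Icc 0 r) :
    linearPatch g r t ∈ Icc 0 (g r) := by
  rw [linearPatch, if_pos ht.2]
  refine ⟨by have := ht.1; positivity, ?_⟩
  calc g r / r * t ≤ g r / r * r := by gcongr; exact ht.2
    _ = g r := div_mul_cancel₀ _ hr.ne'

theorem isTimeChange_linearPatch (hc : ContinuousOn g (Icc 0 1)) (hm : StrictMonoOn g (Icc 0 1))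
    (h1 : g 1 = 1) (hr : r ∈ Ioo 0 1) (hgr : 0 < g r) : IsTimeChange (linearPatch g r) := by
  have hrI : r ∈ Icc (0 : ℝ) 1 := ⟨hr.1.le, hr.2.le⟩
  refine ⟨?_, ?_, by simp [linearPatch, hr.1.le], by simp [linearPatch, not_le.2 hr.2, h1]⟩
  · refine ContinuousOn.if (fun t ht => ?_) (continuousOn_const.mul continuousOn_id) ?_
    · rw [show {t : ℝ | t ≤ r} = Iic r from rfl, frontier_Iic] at ht
      rw [mem_singleton_iff.1 ht.2, div_mul_cancel₀ _ hr.1.ne']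
    · rw [show {t : ℝ | ¬t ≤ r} = Ioi r from ext fun _ => not_le, closure_Ioi]
      exact hc.mono inter_subset_left
  · intro t ht u hu htu
    by_cases hur : u ≤ r
    · rw [linearPatch, linearPatch, if_pos hur, if_pos (htu.le.trans hur)]
      exact mul_lt_mul_of_pos_left htu (div_pos hgr hr.1)
    · rw [show linearPatch g r u = g u from if_neg hur]
      by_cases htr : t ≤ r
      · exact (linearPatch_mem_Icc hr.1 hgr ⟨ht.1, htr⟩).2.trans_lt
          (hm hrI hu (not_le.1 hur))
      · rw [show linearPatch g r t = g t from if_neg htr]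
        exact hm ht hu htu

theorem abs_linearPatch_sub_le {q : ℝ} (hq : ∀ t ∈ Icc (0 : ℝ) 1, |g t - t| ≤ q)
    (hr : r ∈ Ioo 0 1) (hgr : 0 < g r) {t : ℝ} (ht : t ∈ Icc (0 : ℝ) 1) :
    |linearPatch g r t - t| ≤ r + q := by
  by_cases htr : t ≤ r
  · have hmem := linearPatch_mem_Icc hr.1 hgr ⟨ht.1, htr⟩
    have hgq := (abs_le.1 (hq r ⟨hr.1.le, hr.2.le⟩)).2
    have hq0 := (abs_nonneg _).trans (hq t ht)
    exact abs_sub_le_iff.2 ⟨by linarith [hmem.2, ht.1], by linarith [hmem.1, htr]⟩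
  · rw [linearPatch, if_neg htr]
    linarith [hq t ht, hr.1]

end linearPatch

/-- `l` read in the affine coordinates `t ↦ a + (1 - a) * t` of `[a, 1]` (source) and
`t ↦ b + (1 - b) * t` of `[b, 1]` (target). -/
noncomputable def rescaleTimeChange (l : ℝ → ℝ) (a b t : ℝ) : ℝ :=
  (l (a + (1 - a) * t) - b) / (1 - b)

section rescaleTimeChange

variable {l : ℝ → ℝ} {a b : ℝ}

theorem add_one_sub_mul_mem_Icc (ha : a ∈ Icc (0 : ℝ) 1) {t : ℝ} (ht : t ∈ Icc (0 : ℝ) 1) :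
    a + (1 - a) * t ∈ Icc (0 : ℝ) 1 :=
  ⟨by nlinarith [ha.1, ha.2, ht.1], by nlinarith [ha.2, ht.2]⟩

theorem add_mul_rescaleTimeChange (hb : b ≠ 1) (t : ℝ) :
    b + (1 - b) * rescaleTimeChange l a b t = l (a + (1 - a) * t) := by
  rw [rescaleTimeChange, mul_div_cancel₀ _ (sub_ne_zero.2 hb.symm)]
  ring

theorem continuousOn_rescaleTimeChange (hl : ContinuousOn l (Icc 0 1)) (ha : a ∈ Icc (0 : ℝ) 1) :
    ContinuousOn (rescaleTimeChange l a b) (Icc 0 1) :=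
  ((hl.comp (by fun_prop) fun _ ht => add_one_sub_mul_mem_Icc ha ht).sub
    continuousOn_const).div_const _

theorem strictMonoOn_rescaleTimeChange (hl : StrictMonoOn l (Icc 0 1)) (ha : a ∈ Ico (0 : ℝ) 1)
    (hb : b < 1) : StrictMonoOn (rescaleTimeChange l a b) (Icc 0 1) := by
  intro t ht u hu htu
  have ha' : a ∈ Icc (0 : ℝ) 1 := ⟨ha.1, ha.2.le⟩
  refine div_lt_div_of_pos_right (sub_lt_sub_right (hl (add_one_sub_mul_mem_Icc ha' ht)
    (add_one_sub_mul_mem_Icc ha' hu) ?_) b) (sub_pos.2 hb)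
  nlinarith [ha.2]

theorem rescaleTimeChange_one (hl : l 1 = 1) (hb : b ≠ 1) : rescaleTimeChange l a b 1 = 1 := by
  rw [rescaleTimeChange, mul_one, add_sub_cancel, hl, div_self (sub_ne_zero.2 hb.symm)]

theorem abs_rescaleTimeChange_sub_le {e : ℝ} (hl : ∀ u ∈ Icc (0 : ℝ) 1, |l u - u| ≤ e)
    (ha : a ∈ Icc (0 : ℝ) 1) (hb : b < 1) {t : ℝ} (ht : t ∈ Icc (0 : ℝ) 1) :
    |rescaleTimeChange l a b t - t| ≤ (e + |a - b|) / (1 - b) := by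
  have h1b : 0 < 1 - b := sub_pos.2 hb
  have hsplit : rescaleTimeChange l a b t - t =
      ((l (a + (1 - a) * t) - (a + (1 - a) * t)) + (a - b) * (1 - t)) / (1 - b) := by
    rw [rescaleTimeChange]; field_simp; ring
  rw [hsplit, abs_div, abs_of_pos h1b]
  gcongr
  calc _ ≤ |l (a + (1 - a) * t) - (a + (1 - a) * t)| + |(a - b) * (1 - t)| := abs_add_le _ _
    _ ≤ e + |a - b| * 1 := by
        rw [abs_mul]
        gcongr
        · exact hl _ (add_one_sub_mul_mem_Icc ha ht)
        · exact abs_le.2 ⟨by linarith [ht.2], by linarith [ht.1]⟩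
    _ = e + |a - b| := by rw [mul_one]

end rescaleTimeChange

theorem abs_sub_sub_lt_of_linearPatch {X Y l : ℝ → ℝ} {a b r ε : ℝ}
    (ha : a ∈ Icc (0 : ℝ) 1) (hb : b < 1) (hr : 0 < r) (hgr : 0 < rescaleTimeChange l a b r)
    (hXY : ∀ u ∈ Icc (0 : ℝ) 1, |X u - Y (l u)| < ε)
    (hnear : ∀ u ∈ Icc a (a + (1 - a) * r), |Y (l u) - Y b| < ε)
    (hright : ∀ v ∈ Icc b (l (a + (1 - a) * r)), |Y v - Y b| < ε)
    {t : ℝ} (ht : t ∈ Icc (0 : ℝ) 1) :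
    |X (a + (1 - a) * t) - X a -
      (Y (b + (1 - b) * linearPatch (rescaleTimeChange l a b) r t) - Y b)| < 5 * ε := by
  have h1a : 0 ≤ 1 - a := sub_nonneg.2 ha.2
  have hXa : |X a - Y (l a)| < ε := hXY a ha
  have hYa : |Y (l a) - Y b| < ε := hnear a ⟨le_rfl, le_add_of_nonneg_right (mul_nonneg h1a hr.le)⟩
  have hXt : |X (a + (1 - a) * t) - Y (l (a + (1 - a) * t))| < ε :=
    hXY _ (add_one_sub_mul_mem_Icc ha ht)
  rw [abs_lt] at hXa hYa hXt ⊢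
  by_cases htr : t ≤ r
  · have hμ := linearPatch_mem_Icc hr hgr ⟨ht.1, htr⟩
    have hYt : |Y (l (a + (1 - a) * t)) - Y b| < ε := hnear _
      ⟨le_add_of_nonneg_right (mul_nonneg h1a ht.1), by gcongr⟩
    have hYμ : |Y (b + (1 - b) * linearPatch (rescaleTimeChange l a b) r t) - Y b| < ε := by
      refine hright _ ⟨by nlinarith [hμ.1], ?_⟩
      rw [← add_mul_rescaleTimeChange (l := l) (a := a) hb.ne]
      nlinarith [hμ.2]
    rw [abs_lt] at hYt hYμ
    constructor <;> linarith
  · rw [show linearPatch (rescaleTimeChange l a b) r t = rescaleTimeChange l a b t from if_neg htr,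
      add_mul_rescaleTimeChange hb.ne]
    constructor <;> linarith

theorem skorokhodTendsto_rescale {x : ℕ → ℝ → ℝ} {y : ℝ → ℝ} {lam : ℕ → ℝ → ℝ}
    {e₁ e₂ : ℕ → ℝ} {b : ℝ} {bn : ℕ → ℝ}
    (hlam : ∀ n, IsTimeChange (lam n)) (he₁ : Tendsto e₁ atTop (𝓝 0))
    (he₂ : Tendsto e₂ atTop (𝓝 0)) (hle₁ : ∀ n, ∀ t ∈ Icc (0 : ℝ) 1, |lam n t - t| ≤ e₁ n)
    (hle₂ : ∀ n, ∀ t ∈ Icc (0 : ℝ) 1, |x n t - y (lam n t)| ≤ e₂ n)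
    (hb : b < 1) (hbn : ∀ n, bn n ∈ Ico (0 : ℝ) 1) (hbnlim : Tendsto bn atTop (𝓝 b))
    (hyb : ContinuousWithinAt y (Ici b) b)
    (hnear : ∀ ε > 0, ∃ δ > 0, ∀ᶠ n in atTop, ∀ u ∈ Icc (0 : ℝ) 1, bn n ≤ u → u < bn n + δ →
      |y (lam n u) - y b| < ε) :
    SkorokhodTendsto (fun n t => x n (bn n + (1 - bn n) * t) - x n (bn n))
      (fun t => y (b + (1 - b) * t) - y b) := by
  have hbnI n : bn n ∈ Icc (0 : ℝ) 1 := ⟨(hbn n).1, (hbn n).2.le⟩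
  set d : ℕ → ℝ := fun n => e₁ n + |bn n - b|
  set q : ℕ → ℝ := fun n => d n / (1 - b)
  -- the `1 / (n + 1)` term makes `g n (r n)` positive, so that `linearPatch` is a time change
  set r : ℕ → ℝ := fun n => q n + 1 / ((n : ℝ) + 1)
  set g : ℕ → ℝ → ℝ := fun n => rescaleTimeChange (lam n) (bn n) b
  have hd : Tendsto d atTop (𝓝 0) := by
    simpa using he₁.add (tendsto_sub_nhds_zero_iff.2 hbnlim).abs
  have hq : Tendsto q atTop (𝓝 0) := by simpa using hd.div_const (1 - b)
  have hr : Tendsto r atTop (𝓝 0) := by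
    simpa only [add_zero] using hq.add tendsto_one_div_add_atTop_nhds_zero_nat
  have hgq n : ∀ t ∈ Icc (0 : ℝ) 1, |g n t - t| ≤ q n := fun t ht =>
    abs_rescaleTimeChange_sub_le (hle₁ n) (hbnI n) hb ht
  have hq0 n : 0 ≤ q n := (abs_nonneg _).trans (hgq n 0 (left_mem_Icc.2 zero_le_one))
  have hr0 n : 0 < r n := add_pos_of_nonneg_of_pos (hq0 n) Nat.one_div_pos_of_nat
  have hgr n (hn : r n ≤ 1) : 0 < g n (r n) := by
    have := (abs_le.1 (hgq n (r n) ⟨(hr0 n).le, hn⟩)).1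
    linarith [show (0 : ℝ) < 1 / ((n : ℝ) + 1) from Nat.one_div_pos_of_nat]
  refine SkorokhodTendsto.of_eventually (fun n => linearPatch (g n) (r n)) ?_ ?_ ?_
  · filter_upwards [hr.eventually_lt_const one_pos] with n hn
    exact isTimeChange_linearPatch (continuousOn_rescaleTimeChange (hlam n).continuousOn (hbnI n))
      (strictMonoOn_rescaleTimeChange (hlam n).strictMonoOn (hbn n) hb)
      (rescaleTimeChange_one (hlam n).map_one hb.ne) ⟨hr0 n, hn⟩ (hgr n hn.le)
  · intro ε hε
    filter_upwards [hr.eventually_lt_const one_pos, (hr.add hq).eventually_le_const (by simpa)]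
      with n hn hrq t ht
    exact (abs_linearPatch_sub_le (hgq n) ⟨hr0 n, hn⟩ (hgr n hn.le) ht).trans hrq
  · intro ε hε
    have hε5 : 0 < ε / 5 := by positivity
    obtain ⟨δ₁, hδ₁, hright⟩ := Metric.continuousWithinAt_iff.1 hyb (ε / 5) hε5
    obtain ⟨δ₂, hδ₂, hnear⟩ := hnear (ε / 5) hε5
    filter_upwards [hr.eventually_lt_const one_pos, hr.eventually_lt_const hδ₂,
      (hd.add hr).eventually_lt_const (by simpa using hδ₁), he₂.eventually_lt_const hε5, hnear]
      with n hr1 hrδ₂ hdrδ₁ he₂n hnearn t ht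
    have hsr : bn n + (1 - bn n) * r n ≤ bn n + r n := by nlinarith [(hbn n).1, hr0 n]
    refine (abs_sub_sub_lt_of_linearPatch (hbnI n) hb (hr0 n) (hgr n hr1.le)
      (fun u hu => (hle₂ n u hu).trans_lt he₂n) (fun u hu => ?_) (fun v hv => ?_) ht).le.trans
      (by linarith)
    · exact hnearn u ⟨(hbn n).1.trans hu.1,
        hu.2.trans (add_one_sub_mul_mem_Icc (hbnI n) ⟨(hr0 n).le, hr1.le⟩).2⟩ hu.1
        (by linarith [hu.2])
    · rw [← Real.dist_eq]
      refine hright hv.1 ?_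
      have hlr := (abs_le.1 (hle₁ n _
        (add_one_sub_mul_mem_Icc (hbnI n) ⟨(hr0 n).le, hr1.le⟩))).2
      rw [Real.dist_eq, abs_of_nonneg (sub_nonneg.2 hv.1)]
      linarith [hv.2, le_abs_self (bn n - b), show d n = e₁ n + |bn n - b| from rfl]

theorem eventually_apply_eq_of_tendsto_jump {x : ℕ → ℝ → ℝ} {y : ℝ → ℝ} {lam : ℕ → ℝ → ℝ}
    {e₁ e₂ : ℕ → ℝ} {b : ℝ} {bn : ℕ → ℝ} (hx : ∀ n, Cadlag (x n)) (hy : Cadlag y)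
    (hlam : ∀ n, IsTimeChange (lam n)) (he₁ : Tendsto e₁ atTop (𝓝 0))
    (he₂ : Tendsto e₂ atTop (𝓝 0)) (hle₁ : ∀ n, ∀ t ∈ Icc (0 : ℝ) 1, |lam n t - t| ≤ e₁ n)
    (hle₂ : ∀ n, ∀ t ∈ Icc (0 : ℝ) 1, |x n t - y (lam n t)| ≤ e₂ n)
    (hb : b ∈ Ioo (0 : ℝ) 1) (hbn : ∀ n, bn n ∈ Icc (0 : ℝ) 1) (hbnlim : Tendsto bn atTop (𝓝 b))
    (hΔ : jump y b ≠ 0)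
    (hjump : Tendsto (fun n => jump (x n) (bn n)) atTop (𝓝 (jump y b))) :
    ∀ᶠ n in atTop, lam n (bn n) = b := by
  refine hy.eventually_eq_of_tendsto_jump hb hΔ (hbnlim.congr_dist ?_) (hjump.congr_dist ?_)
  · refine squeeze_zero (fun n => dist_nonneg) (fun n => ?_) he₁
    rw [dist_comm, Real.dist_eq]
    exact hle₁ n _ (hbn n)
  · refine squeeze_zero' (Eventually.of_forall fun n => dist_nonneg) ?_
      (by simpa using he₂.const_mul 2)
    filter_upwards [hbnlim.eventually_const_lt hb.1] with n hn
    exact (hx n).abs_jump_sub_jump_comp_le hy (hlam n) ⟨hn, (hbn n).2⟩ (hle₂ n)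

theorem eventually_abs_comp_sub_lt_of_continuousWithinAt {y : ℝ → ℝ} {lam : ℕ → ℝ → ℝ}
    {e₁ : ℕ → ℝ} {b : ℝ} {bn : ℕ → ℝ} {S : Set ℝ} (hyS : ContinuousWithinAt y S b)
    (hS : ∀ᶠ n in atTop, ∀ u ∈ Icc (0 : ℝ) 1, bn n ≤ u → lam n u ∈ S)
    (he₁ : Tendsto e₁ atTop (𝓝 0)) (hle₁ : ∀ n, ∀ t ∈ Icc (0 : ℝ) 1, |lam n t - t| ≤ e₁ n)
    (hbnlim : Tendsto bn atTop (𝓝 b)) :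
    ∀ ε > 0, ∃ δ > 0, ∀ᶠ n in atTop, ∀ u ∈ Icc (0 : ℝ) 1, bn n ≤ u → u < bn n + δ →
      |y (lam n u) - y b| < ε := by
  intro ε hε
  obtain ⟨δ, hδ, hy⟩ := Metric.continuousWithinAt_iff.1 hyS ε hε
  refine ⟨δ / 2, half_pos hδ, ?_⟩
  have hd : Tendsto (fun n => e₁ n + |bn n - b|) atTop (𝓝 0) := by
    simpa using he₁.add (tendsto_sub_nhds_zero_iff.2 hbnlim).abs
  filter_upwards [hS, hd.eventually_lt_const (half_pos hδ)] with n hSn hdn u hu hbu hub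
  rw [← Real.dist_eq]
  refine hy (hSn u hu hbu) ?_
  have := abs_le.1 (hle₁ n u hu)
  rw [Real.dist_eq, abs_sub_lt_iff]
  constructor <;> linarith [le_abs_self (bn n - b), neg_abs_le (bn n - b)]

/-- If `x n → y` in the Skorokhod sense, `b_n → b ∈ (0,1)` with `b_n ∈ [0,1)`, and either
`y` is continuous at `b`, or `Δy(b) ≠ 0` and `Δx_n(b_n) → Δy(b)`, then
`t ↦ x n (b_n + (1−b_n)t) − x n (b_n)` converges in the Skorokhod sense to
`t ↦ y (b + (1−b)t) − y b`. -/
theorem stmt10 (x : ℕ → ℝ → ℝ) (y : ℝ → ℝ)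
    (hxc : ∀ n, Cadlag (x n)) (hyc : Cadlag y)
    (hconv : SkorokhodTendsto x y)
    (b : ℝ) (hb : b ∈ Set.Ioo (0 : ℝ) 1)
    (bn : ℕ → ℝ) (hbn : ∀ n, bn n ∈ Set.Ico (0 : ℝ) 1)
    (hbnlim : Filter.Tendsto bn Filter.atTop (nhds b))
    (hcase : ContinuousWithinAt y (Set.Icc 0 1) b ∨
      (jump y b ≠ 0 ∧
        Filter.Tendsto (fun n => jump (x n) (bn n)) Filter.atTop (nhds (jump y b)))) :
    SkorokhodTendsto (fun n t => x n (bn n + (1 - bn n) * t) - x n (bn n))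
      (fun t => y (b + (1 - b) * t) - y b) := by
  obtain ⟨lam, hlam, e₁, e₂, he₁, he₂, hle₁, hle₂⟩ := hconv.exists_le hxc hyc
  have hbnI n : bn n ∈ Icc (0 : ℝ) 1 := ⟨(hbn n).1, (hbn n).2.le⟩
  have hyb : ContinuousWithinAt y (Ici b) b := hyc.1 b ⟨hb.1.le, hb.2⟩
  refine skorokhodTendsto_rescale hlam he₁ he₂ hle₁ hle₂ hb.2 hbn hbnlim hyb ?_
  rcases hcase with hcont | ⟨hΔ, hjump⟩
  · exact eventually_abs_comp_sub_lt_of_continuousWithinAt hcont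
      (Eventually.of_forall fun n u hu _ => (hlam n).mapsTo hu) he₁ hle₁ hbnlim
  · have halign : ∀ᶠ n in atTop, lam n (bn n) = b := eventually_apply_eq_of_tendsto_jump
      hxc hyc hlam he₁ he₂ hle₁ hle₂ hb hbnI hbnlim hΔ hjump
    refine eventually_abs_comp_sub_lt_of_continuousWithinAt hyb ?_ he₁ hle₁ hbnlim
    filter_upwards [halign] with n hn u hu hbu
    exact hn ▸ (hlam n).strictMonoOn.monotoneOn (hbnI n) hu hbu
end

section
/- For a càdlàg x : [0,1] → ℝ, write x̲(t) = inf_{s∈[0,t]} x(s), and for t ∈ (0,1) define g(x,t) = sup{ s ∈ [0,t] : min(x(s), x(s−)) = x̲(t) } and d(x,t) = min( inf{ s ∈ (t,1] : min(x(s), x(s−)) ≤ x̲(t) }, 1 ). Suppose x_n, x : [0,1] → ℝ are càdlàg with x_n → x in the Skorokhod sense, t_n → t ∈ (0,1), the map s ↦ x̲(s) is continuous on [0,1], and writing g = g(x,t), d = d(x,t): 0 < g < t < d < 1, x̲(g − ε) > x̲(t) for every ε ∈ (0,g), and x̲(t) > x̲(d + ε) for every ε ∈ (0, 1−d). Then g(x_n,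 t_n) → g(x,t) and d(x_n, t_n) → d(x,t) as n → ∞. -/
open Filter Topology

/-- The running infimum `x̲(t) = inf_{s ∈ [0,t]} x(s)`. -/
noncomputable def runInf (x : ℝ → ℝ) (t : ℝ) : ℝ := ⨅ s : Set.Icc (0 : ℝ) t, x (s : ℝ)

/-- `g(x,t) = sup{s ∈ [0,t] : min(x(s), x(s−)) = x̲(t)}`. -/
noncomputable def gfun (x : ℝ → ℝ) (t : ℝ) : ℝ :=
  sSup {s : ℝ | s ∈ Set.Icc 0 t ∧ min (x s) (leftVal x s) = runInf x t}

/-- `d(x,t) = inf{s ∈ (t,1] : min(x(s), x(s−)) ≤ x̲(t)} ∧ 1`. -/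
noncomputable def dfun (x : ℝ → ℝ) (t : ℝ) : ℝ :=
  sInf ({s : ℝ | s ∈ Set.Ioc t 1 ∧ min (x s) (leftVal x s) ≤ runInf x t} ∪ {1})

/-!
Skorokhod convergence is uniform convergence after time changes `λₙ → id`, so running infima
converge wherever `x̲` is continuous: `x̲ₙ(tₙ) → x̲(t)` and `x̲ₙ(b) → x̲(b)`.

Strictly between `g` and `d` the lower envelope `min (x s) (x (s−))` stays above `x̲(t)`, by
compactness uniformly on compact subintervals; this margin survives the time change, so `xₙ`
does not come back to `x̲ₙ(tₙ)` on `(g + ε, d − ε]`, which bounds `g(xₙ, tₙ)` from above and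
`d(xₙ, tₙ)` from below. Conversely, `x̲(g − ε) > x̲(t) > x̲(d + ε)` passes to `xₙ`: the running
infimum of `xₙ` up to `tₙ` is attained (by `min (xₙ s) (xₙ (s−))`, the path being càdlàg)
after `g − ε`, and it is undercut before `d + ε`.
-/

open Set

theorem tendsto_nhds_of_eventually_le_of_eventually_ge_Ioo {α ι : Type*} [LinearOrder α]
    [DenselyOrdered α] [TopologicalSpace α] [OrderTopology α] {l : Filter ι} {f : ι → α}
    {lo L hi : α} (hlo : lo < L) (hhi : L < hi) (hle : ∀ a ∈ Ioo lo L, ∀ᶠ n in l, a ≤ f n)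
    (hge : ∀ b ∈ Ioo L hi, ∀ᶠ n in l, f n ≤ b) : Tendsto f l (𝓝 L) := by
  refine tendsto_order.2 ⟨fun a' ha' => ?_, fun b' hb' => ?_⟩
  · obtain ⟨a, ha, haL⟩ := exists_between (max_lt hlo ha')
    exact (hle a ⟨(le_max_left _ _).trans_lt ha, haL⟩).mono fun n hn =>
      ((le_max_right _ _).trans_lt ha).trans_le hn
  · obtain ⟨b, hLb, hb⟩ := exists_between (lt_min hhi hb')
    exact (hge b ⟨hLb, hb.trans_le (min_le_left _ _)⟩).mono fun n hn =>
      hn.trans_lt (hb.trans_le (min_le_right _ _))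

theorem tendstoUniformlyOn_zero_of_tendsto_iSup {ι α : Type*} {l : Filter ι} {F : ι → α → ℝ}
    {S : Set α} (hbdd : ∀ i, BddAbove (range fun u : S => |F i u|))
    (h : Tendsto (fun i => ⨆ u : S, |F i u|) l (𝓝 0)) : TendstoUniformlyOn F 0 l S :=
  Metric.tendstoUniformlyOn_iff.2 fun ε hε => (h.eventually (gt_mem_nhds hε)).mono
    fun i hi u hu => by
      simpa only [Pi.zero_apply, dist_zero_left, Real.norm_eq_abs] using
        (le_ciSup (hbdd i) ⟨u, hu⟩).trans_lt hi

section Cadlag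

variable {x : ℝ → ℝ} {s t a b c : ℝ}

theorem Cadlag.tendsto_leftVal_s14 (hx : Cadlag x) (hs : s ∈ Ioc (0 : ℝ) 1) :
    Tendsto x (𝓝[<] s) (𝓝 (leftVal x s)) := by
  obtain ⟨L, hL⟩ := hx.2 s hs
  rwa [leftVal, if_neg hs.1.not_ge, hL.limUnder_eq]

theorem Cadlag.eventually_mem (hx : Cadlag x) (hs : s ∈ Icc (0 : ℝ) 1)
    {U : Set ℝ} (hU : IsOpen U) (hxs : x s ∈ U) (hls : leftVal x s ∈ U) :
    ∀ᶠ u in 𝓝[Icc 0 1] s, x u ∈ U := by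
  have hleft : ∀ᶠ u in 𝓝[Icc 0 1 ∩ Iio s] s, x u ∈ U := by
    rcases hs.1.eq_or_lt with rfl | hs0
    · exact eventually_nhdsWithin_of_forall fun u hu => absurd hu.1.1 hu.2.not_ge
    · exact nhdsWithin_mono _ inter_subset_right (hx.tendsto_leftVal_s14 ⟨hs0, hs.2⟩ (hU.mem_nhds hls))
  have hright : ∀ᶠ u in 𝓝[Icc 0 1 ∩ Ici s] s, x u ∈ U := by
    rcases hs.2.eq_or_lt with rfl | hs1
    · exact eventually_nhdsWithin_of_forall fun u hu => le_antisymm hu.1.2 hu.2 ▸ hxs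
    · exact nhdsWithin_mono _ inter_subset_right (hx.1 s ⟨hs.1, hs1⟩ (hU.mem_nhds hxs))
  rw [← inter_univ (Icc 0 1), ← Iio_union_Ici (a := s), inter_union_distrib_left,
    nhdsWithin_union]
  exact eventually_sup.2 ⟨hleft, hright⟩

theorem Cadlag.isBounded_image (hx : Cadlag x) : Bornology.IsBounded (x '' Icc 0 1) := by
  refine isCompact_Icc.induction_on (p := fun S => Bornology.IsBounded (x '' S)) (by simp)
    (fun S T hST hT => hT.subset (image_mono hST))
    (fun S T hS hT => by rw [image_union]; exact hS.union hT) fun s hs => ?_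
  obtain ⟨R, hR⟩ := exists_gt (max |x s| |leftVal x s|)
  rw [max_lt_iff] at hR
  exact ⟨_, hx.eventually_mem hs isOpen_Ioo (abs_lt.1 hR.1) (abs_lt.1 hR.2),
    (Metric.isBounded_Ioo (-R) R).subset (image_subset_iff.2 fun _ h => h)⟩

/-- `s ↦ min (x s) (x (s−))` is lower semicontinuous; compactness makes a strict lower bound
uniform. -/
theorem Cadlag.exists_lt_forall_le (hx : Cadlag x) (ha : 0 ≤ a) (hb : b ≤ 1)
    (h : ∀ s ∈ Icc a b, c < min (x s) (leftVal x s)) :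
    ∃ β, c < β ∧ ∀ u ∈ Icc a b, β ≤ x u := by
  refine isCompact_Icc.induction_on (p := fun S => ∃ β, c < β ∧ ∀ u ∈ S, β ≤ x u)
    ⟨c + 1, by linarith, by simp⟩
    (fun S T hST ⟨β, hβ, hT⟩ => ⟨β, hβ, fun u hu => hT u (hST hu)⟩)
    (fun S T ⟨β, hβ, hS⟩ ⟨β', hβ', hT⟩ => ⟨min β β', lt_min hβ hβ', fun u hu =>
      hu.elim (fun hu => (min_le_left _ _).trans (hS u hu))
        fun hu => (min_le_right _ _).trans (hT u hu)⟩) fun s hs => ?_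
  have hcs := h s hs
  refine ⟨{u | (c + min (x s) (leftVal x s)) / 2 < x u}, nhdsWithin_mono _ (Icc_subset_Icc ha hb)
    (hx.eventually_mem ⟨ha.trans hs.1, hs.2.trans hb⟩ isOpen_Ioi ?_ ?_), _, by linarith,
    fun u hu => le_of_lt hu⟩
  · exact lt_of_lt_of_le (by linarith) (min_le_left (x s) (leftVal x s))
  · exact lt_of_lt_of_le (by linarith) (min_le_right (x s) (leftVal x s))

theorem runInf_le (hbd : BddBelow (x '' Icc 0 1)) (hs : s ∈ Icc 0 b) (hb : b ≤ 1) :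
    runInf x b ≤ x s :=
  ciInf_le (hbd.mono (by rintro _ ⟨⟨u, hu⟩, rfl⟩; exact ⟨u, ⟨hu.1, hu.2.trans hb⟩, rfl⟩))
    (⟨s, hs⟩ : Icc 0 b)

theorem le_runInf (hb : 0 ≤ b) (h : ∀ s ∈ Icc 0 b, c ≤ x s) : c ≤ runInf x b :=
  haveI : Nonempty (Icc 0 b) := ⟨⟨0, le_rfl, hb⟩⟩
  le_ciInf fun s => h s s.2

theorem Cadlag.le_min_leftVal (hx : Cadlag x) (ha : 0 ≤ a) (hs : s ∈ Ioc a 1)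
    (h : ∀ u ∈ Icc a s, c ≤ x u) : c ≤ min (x s) (leftVal x s) :=
  le_min (h s ⟨hs.1.le, le_rfl⟩) <| ge_of_tendsto (hx.tendsto_leftVal_s14 ⟨ha.trans_lt hs.1, hs.2⟩)
    (eventually_of_mem (Ioo_mem_nhdsLT hs.1) fun u hu => h u ⟨hu.1.le, hu.2.le⟩)

theorem Cadlag.runInf_le_min_leftVal (hx : Cadlag x) (hbd : BddBelow (x '' Icc 0 1))
    (hs : s ∈ Icc 0 b) (hb : b ≤ 1) : runInf x b ≤ min (x s) (leftVal x s) := by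
  rcases hs.1.eq_or_lt with rfl | hs0
  · simpa [leftVal] using runInf_le hbd hs hb
  · exact hx.le_min_leftVal le_rfl ⟨hs0, hs.2.trans hb⟩ fun u hu =>
      runInf_le hbd ⟨hu.1, hu.2.trans hs.2⟩ hb

theorem Cadlag.exists_min_leftVal_le_runInf (hx : Cadlag x) (hb : 0 ≤ b) (hb1 : b ≤ 1) :
    ∃ s ∈ Icc 0 b, min (x s) (leftVal x s) ≤ runInf x b := by
  by_contra! h
  obtain ⟨β, hβ, hxβ⟩ := hx.exists_lt_forall_le le_rfl hb1 h
  exact (le_runInf hb hxβ).not_gt hβ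

theorem le_gfun (hs : s ∈ Icc 0 t) (h : min (x s) (leftVal x s) = runInf x t) : s ≤ gfun x t :=
  le_csSup ⟨t, fun _ hr => hr.1.2⟩ ⟨hs, h⟩

theorem gfun_le (ha : 0 ≤ a) (h : ∀ s ∈ Ioc a t, min (x s) (leftVal x s) ≠ runInf x t) :
    gfun x t ≤ a :=
  Real.sSup_le (fun s hs => le_of_not_gt fun has => h s ⟨has, hs.1.2⟩ hs.2) ha

theorem dfun_le (hs : s ∈ Ioc t 1) (h : min (x s) (leftVal x s) ≤ runInf x t) : dfun x t ≤ s :=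
  csInf_le ⟨t, by rintro r (⟨hr, -⟩ | rfl); exacts [hr.1.le, (hs.1.trans_le hs.2).le]⟩
    (Or.inl ⟨hs, h⟩)

theorem le_dfun (hb : b ≤ 1) (h : ∀ s ∈ Ioc t b, runInf x t < min (x s) (leftVal x s)) :
    b ≤ dfun x t :=
  le_csInf ⟨1, Or.inr rfl⟩ <| by
    rintro s (⟨hs, hle⟩ | rfl)
    exacts [le_of_not_gt fun hsb => (h s ⟨hs.1, hsb.le⟩).not_ge hle, hb]

theorem Cadlag.lt_gfun_of_runInf_lt (hx : Cadlag x) (hbd : BddBelow (x '' Icc 0 1))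
    (ha : 0 ≤ a) (hat : a ≤ t) (ht : t ≤ 1) (h : runInf x t < runInf x a) : a < gfun x t := by
  obtain ⟨s, hs, hsle⟩ := hx.exists_min_leftVal_le_runInf (ha.trans hat) ht
  have heq := le_antisymm hsle (hx.runInf_le_min_leftVal hbd hs ht)
  refine lt_of_lt_of_le (lt_of_not_ge fun hsa => ?_) (le_gfun hs heq)
  exact (hx.runInf_le_min_leftVal hbd ⟨hs.1, hsa⟩ (hat.trans ht)).not_gt (heq ▸ h)

theorem dfun_le_of_runInf_lt (hbd : BddBelow (x '' Icc 0 1)) (hb : 0 ≤ b) (hb1 : b ≤ 1)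
    (ht : t ≤ 1) (h : runInf x b < runInf x t) : dfun x t ≤ b := by
  have : Nonempty (Icc 0 b) := ⟨⟨0, le_rfl, hb⟩⟩
  obtain ⟨⟨s, hs⟩, hst⟩ := exists_lt_of_ciInf_lt h
  have hts : t < s := lt_of_not_ge fun hst' => (runInf_le hbd ⟨hs.1, hst'⟩ ht).not_gt hst
  exact (dfun_le ⟨hts, hs.2.trans hb1⟩ ((min_le_left _ _).trans hst.le)).trans hs.2

theorem Cadlag.runInf_lt_min_leftVal (hx : Cadlag x) (hbd : BddBelow (x '' Icc 0 1))
    (ht : t ≤ 1) (hs : s ∈ Icc 0 1) (hg : gfun x t < s) (hd : s < dfun x t) :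
    runInf x t < min (x s) (leftVal x s) := by
  rcases le_or_gt s t with hst | hts
  · exact (hx.runInf_le_min_leftVal hbd ⟨hs.1, hst⟩ ht).lt_of_ne fun h =>
      (le_gfun ⟨hs.1, hst⟩ h.symm).not_gt hg
  · exact lt_of_not_ge fun h => (dfun_le ⟨hts, hs.2⟩ h).not_gt hd

end Cadlag

theorem abs_runInf_sub_runInf_comp_le {x y lam : ℝ → ℝ} (hxbd : BddBelow (x '' Icc 0 1))
    (hybd : BddBelow (y '' Icc 0 1)) (hmono : StrictMonoOn lam (Icc 0 1))
    (hmaps : MapsTo lam (Icc 0 1) (Icc 0 1)) (hsurj : SurjOn lam (Icc 0 1) (Icc 0 1))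
    {b δ : ℝ} (hb : b ∈ Icc (0 : ℝ) 1) (hδ : ∀ u ∈ Icc (0 : ℝ) 1, |x u - y (lam u)| ≤ δ) :
    |runInf x b - runInf y (lam b)| ≤ δ := by
  rw [abs_sub_le_iff]
  constructor
  · suffices runInf x b - δ ≤ runInf y (lam b) by linarith
    refine le_runInf (hmaps hb).1 fun v hv => ?_
    obtain ⟨u, hu, rfl⟩ := hsurj ⟨hv.1, hv.2.trans (hmaps hb).2⟩
    have hub : u ≤ b := (hmono.le_iff_le hu hb).1 hv.2
    linarith [runInf_le hxbd ⟨hu.1, hub⟩ hb.2, (abs_le.1 (hδ u hu)).2]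
  · suffices runInf y (lam b) - δ ≤ runInf x b by linarith
    refine le_runInf hb.1 fun u hu => ?_
    have huI : u ∈ Icc (0 : ℝ) 1 := ⟨hu.1, hu.2.trans hb.2⟩
    linarith [runInf_le hybd ⟨(hmaps huI).1, hmono.monotoneOn huI hb hu.2⟩ (hmaps hb).2,
      (abs_le.1 (hδ u huI)).1]

namespace SkorokhodTendsto

variable {x : ℕ → ℝ → ℝ} {y : ℝ → ℝ}

theorem exists_tendstoUniformlyOn (h : SkorokhodTendsto x y) (hx : ∀ n, Cadlag (x n))
    (hy : Cadlag y) :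
    ∃ lam : ℕ → ℝ → ℝ, (∀ n, StrictMonoOn (lam n) (Icc 0 1) ∧
      MapsTo (lam n) (Icc 0 1) (Icc 0 1) ∧ SurjOn (lam n) (Icc 0 1) (Icc 0 1)) ∧
      TendstoUniformlyOn (fun n u => lam n u - u) 0 atTop (Icc 0 1) ∧
      TendstoUniformlyOn (fun n u => x n u - y (lam n u)) 0 atTop (Icc 0 1) := by
  obtain ⟨lam, hlam, hid, hdiff⟩ := h
  -- an unbounded `⨆` is `0` in `ℝ`, so the suprema in `h` only control bounded differences
  obtain ⟨Cy, hCy⟩ := hy.isBounded_image.exists_norm_le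
  refine ⟨lam, fun n => ⟨(hlam n).2.1, (hlam n).2.2.2.2⟩,
    tendstoUniformlyOn_zero_of_tendsto_iSup (fun n => ⟨1, ?_⟩) hid,
    tendstoUniformlyOn_zero_of_tendsto_iSup (fun n => ?_) hdiff⟩
  · rintro _ ⟨⟨u, hu⟩, rfl⟩
    have := (hlam n).2.2.2.2.1 hu
    exact abs_sub_le_iff.2 ⟨by linarith [this.2, hu.1], by linarith [this.1, hu.2]⟩
  · obtain ⟨Cx, hCx⟩ := (hx n).isBounded_image.exists_norm_le
    refine ⟨Cx + Cy, ?_⟩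
    rintro _ ⟨⟨u, hu⟩, rfl⟩
    have h1 := hCx _ (mem_image_of_mem _ hu)
    have h2 := hCy _ (mem_image_of_mem _ ((hlam n).2.2.2.2.1 hu))
    rw [Real.norm_eq_abs] at h1 h2
    exact (abs_sub _ _).trans (add_le_add h1 h2)

theorem tendsto_runInf (hconv : SkorokhodTendsto x y) (hx : ∀ n, Cadlag (x n)) (hy : Cadlag y)
    {b : ℕ → ℝ} {b₀ : ℝ} (hcont : ContinuousWithinAt (runInf y) (Icc 0 1) b₀)
    (hb : Tendsto b atTop (𝓝[Icc 0 1] b₀)) :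
    Tendsto (fun n => runInf (x n) (b n)) atTop (𝓝 (runInf y b₀)) := by
  obtain ⟨lam, hlam, hid, hdiff⟩ := hconv.exists_tendstoUniformlyOn hx hy
  have hbI : ∀ᶠ n in atTop, b n ∈ Icc 0 1 := hb self_mem_nhdsWithin
  have hlamb : Tendsto (fun n => lam n (b n)) atTop (𝓝[Icc 0 1] b₀) := by
    refine tendsto_nhdsWithin_iff.2 ⟨?_, hbI.mono fun n hn => (hlam n).2.1 hn⟩
    simpa using (hid.tendsto_comp continuousWithinAt_const hb).add
      (tendsto_nhds_of_tendsto_nhdsWithin hb)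
  have hclose : Tendsto (fun n => runInf (x n) (b n) - runInf y (lam n (b n))) atTop (𝓝 0) := by
    refine Metric.tendsto_nhds.2 fun ε hε => ?_
    filter_upwards [hbI, Metric.tendstoUniformlyOn_iff.1 hdiff (ε / 2) (half_pos hε)]
      with n hbn hn
    rw [Real.dist_eq, sub_zero]
    refine (abs_runInf_sub_runInf_comp_le (hx n).isBounded_image.bddBelow
      hy.isBounded_image.bddBelow (hlam n).1 (hlam n).2.1 (hlam n).2.2 hbn
      fun u hu => ?_).trans_lt (half_lt_self hε)
    simpa only [Pi.zero_apply, dist_zero_left, Real.norm_eq_abs] using (hn u hu).le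
  simpa using hclose.add (hcont.tendsto.comp hlamb)

theorem eventually_lt_of_le (hconv : SkorokhodTendsto x y) (hx : ∀ n, Cadlag (x n))
    (hy : Cadlag y) {a a' b b' β γ : ℝ} (ha : 0 ≤ a) (ha' : a' < a) (hb' : b < b') (hb : b ≤ 1)
    (hβ : ∀ u ∈ Icc a' b', β ≤ y u) (hγ : γ < β) :
    ∀ᶠ n in atTop, ∀ u ∈ Icc a b, γ < x n u := by
  obtain ⟨lam, -, hid, hdiff⟩ := hconv.exists_tendstoUniformlyOn hx hy
  filter_upwards [Metric.tendstoUniformlyOn_iff.1 hid _ (lt_min (sub_pos.2 ha') (sub_pos.2 hb')),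
    Metric.tendstoUniformlyOn_iff.1 hdiff _ (sub_pos.2 hγ)] with n hlam hxy u hu
  have huI : u ∈ Icc (0 : ℝ) 1 := ⟨ha.trans hu.1, hu.2.trans hb⟩
  have h1 := hlam u huI
  have h2 := hxy u huI
  simp only [Pi.zero_apply, dist_zero_left, Real.norm_eq_abs, abs_lt] at h1 h2
  have h3 := hβ (lam n u) ⟨by linarith [min_le_left (a - a') (b' - b), hu.1],
    by linarith [min_le_right (a - a') (b' - b), hu.2]⟩
  linarith

theorem eventually_lt_min_leftVal (hconv : SkorokhodTendsto x y) (hx : ∀ n, Cadlag (x n))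
    (hy : Cadlag y) {ρ : ℕ → ℝ} {ρ₀ a a' b b' : ℝ} (hρ : Tendsto ρ atTop (𝓝 ρ₀)) (ha : 0 ≤ a')
    (ha' : a' < a) (hb' : b < b') (hb : b' ≤ 1)
    (h : ∀ s ∈ Icc a' b', ρ₀ < min (y s) (leftVal y s)) :
    ∀ᶠ n in atTop, ∀ s ∈ Ioc a b, ρ n < min (x n s) (leftVal (x n) s) := by
  obtain ⟨β, hβ, hyβ⟩ := hy.exists_lt_forall_le ha hb h
  filter_upwards [hconv.eventually_lt_of_le hx hy (ha.trans ha'.le) ha' hb' (hb'.le.trans hb) hyβ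
      (show (ρ₀ + β) / 2 < β by linarith),
    hρ.eventually (gt_mem_nhds (show ρ₀ < (ρ₀ + β) / 2 by linarith))] with n hxn hρn s hs
  exact hρn.trans_le <| (hx n).le_min_leftVal (ha.trans ha'.le) ⟨hs.1, hs.2.trans (hb'.le.trans hb)⟩
    fun u hu => (hxn u ⟨hu.1, hu.2.trans hs.2⟩).le

theorem eventually_runInf_lt_min_leftVal (hconv : SkorokhodTendsto x y)
    (hx : ∀ n, Cadlag (x n)) (hy : Cadlag y) {tn : ℕ → ℝ} {t a b : ℝ}
    (hrt : Tendsto (fun n => runInf (x n) (tn n)) atTop (𝓝 (runInf y t))) (ht : t ≤ 1)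
    (hg0 : 0 ≤ gfun y t) (hga : gfun y t < a) (hbd : b < dfun y t) (hd1 : dfun y t ≤ 1) :
    ∀ᶠ n in atTop, ∀ s ∈ Ioc a b, runInf (x n) (tn n) < min (x n s) (leftVal (x n) s) :=
  hconv.eventually_lt_min_leftVal hx hy hrt (a' := (gfun y t + a) / 2)
    (b' := (b + dfun y t) / 2) (by linarith) (by linarith) (by linarith) (by linarith)
    fun s hs => hy.runInf_lt_min_leftVal hy.isBounded_image.bddBelow ht
      ⟨by linarith [hs.1], by linarith [hs.2]⟩ (by linarith [hs.1]) (by linarith [hs.2])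

end SkorokhodTendsto

/-- If `x n → y` Skorokhod, `t_n → t ∈ (0,1)`, the running infimum of `y` is continuous,
`0 < g(y,t) < t < d(y,t) < 1`, and the running infimum strictly decreases through the
levels at `g` and `d`, then `g(x n, t_n) → g(y,t)` and `d(x n, t_n) → d(y,t)`. -/
theorem stmt14 (x : ℕ → ℝ → ℝ) (y : ℝ → ℝ)
    (hxc : ∀ n, Cadlag (x n)) (hyc : Cadlag y)
    (hconv : SkorokhodTendsto x y)
    (t : ℝ) (ht : t ∈ Set.Ioo (0 : ℝ) 1)
    (tn : ℕ → ℝ) (htn : Filter.Tendsto tn Filter.atTop (nhds t))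
    (hcont : ContinuousOn (runInf y) (Set.Icc 0 1))
    (hg0 : 0 < gfun y t) (hgt : gfun y t < t)
    (htd : t < dfun y t) (hd1 : dfun y t < 1)
    (hgapg : ∀ ε : ℝ, 0 < ε → ε < gfun y t → runInf y t < runInf y (gfun y t - ε))
    (hgapd : ∀ ε : ℝ, 0 < ε → ε < 1 - dfun y t → runInf y (dfun y t + ε) < runInf y t) :
    Filter.Tendsto (fun n => gfun (x n) (tn n)) Filter.atTop (nhds (gfun y t)) ∧
    Filter.Tendsto (fun n => dfun (x n) (tn n)) Filter.atTop (nhds (dfun y t)) := by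
  set g := gfun y t
  set d := dfun y t
  have hxbd n : BddBelow (x n '' Icc 0 1) := (hxc n).isBounded_image.bddBelow
  have htnI : Tendsto tn atTop (𝓝[Icc 0 1] t) :=
    tendsto_nhdsWithin_iff.2 ⟨htn, htn.eventually (Icc_mem_nhds ht.1 ht.2)⟩
  have hr b (hb : b ∈ Icc (0 : ℝ) 1) : Tendsto (fun n => runInf (x n) b) atTop (𝓝 (runInf y b)) :=
    hconv.tendsto_runInf hxc hyc (hcont b hb) (tendsto_const_nhdsWithin hb)
  have hrt := hconv.tendsto_runInf hxc hyc (hcont t (Ioo_subset_Icc_self ht)) htnI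
  have htnI' : ∀ᶠ n in atTop, tn n ∈ Icc (0 : ℝ) 1 := htnI self_mem_nhdsWithin
  refine ⟨tendsto_nhds_of_eventually_le_of_eventually_ge_Ioo hg0 hgt (fun a ha => ?_)
    (fun b hb => ?_), tendsto_nhds_of_eventually_le_of_eventually_ge_Ioo htd hd1
    (fun a ha => ?_) (fun b hb => ?_)⟩
  · have hlt : runInf y t < runInf y a := by
      simpa using hgapg (g - a) (by linarith [ha.2]) (by linarith [ha.1])
    filter_upwards [hrt.eventually_lt (hr a ⟨ha.1.le, by linarith [ha.2]⟩) hlt, htnI',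
      htn.eventually (lt_mem_nhds (ha.2.trans hgt))] with n hn htn1 hatn
    exact ((hxc n).lt_gfun_of_runInf_lt (hxbd n) ha.1.le hatn.le htn1.2 hn).le
  · filter_upwards [hconv.eventually_runInf_lt_min_leftVal hxc hyc hrt ht.2.le hg0.le hb.1
        (by linarith : (t + d) / 2 < d) hd1.le,
      htn.eventually (gt_mem_nhds (by linarith : t < (t + d) / 2))] with n hn htnb
    exact gfun_le (hg0.trans hb.1).le fun s hs => (hn s ⟨hs.1, hs.2.trans htnb.le⟩).ne'
  · filter_upwards [hconv.eventually_runInf_lt_min_leftVal hxc hyc hrt ht.2.le hg0.le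
        (by linarith : g < (g + t) / 2) ha.2 hd1.le,
      htn.eventually (lt_mem_nhds (by linarith : (g + t) / 2 < t))] with n hn htna
    exact le_dfun (ha.2.trans hd1).le fun s hs => hn s ⟨htna.trans hs.1, hs.2⟩
  · have hlt : runInf y b < runInf y t := by
      simpa using hgapd (b - d) (by linarith [hb.1]) (by linarith [hb.2])
    filter_upwards [(hr b ⟨by linarith [hb.1], hb.2.le⟩).eventually_lt hrt hlt, htnI']
      with n hn htn1
    exact dfun_le_of_runInf_lt (hxbd n) (by linarith [hb.1]) hb.2.le htn1.2 hn
end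

section
/- Let n ≥ 1 and let b : ZMod n → ℝ satisfy Σ_{i ∈ ZMod n} b(i) = 0. Assume that no proper cyclic partial sum of b vanishes: for every r ∈ ZMod n and every k with 1 ≤ k ≤ n−1, Σ_{j=0}^{k−1} b(r + j) ≠ 0. Then there exists exactly one r ∈ ZMod n such that all cyclic partial sums starting at r are nonnegative, i.e. Σ_{j=0}^{k−1} b(r + j) ≥ 0 for every k with 1 ≤ k ≤ n (equivalently, under the hypothesis, such that these partial sums are strictly positive for 1 ≤ k ≤ n−1). -/
/-!
Let `F i` be the prefix sum of `b` over `0, …, i - 1`. Since the total sum vanishes, `F` is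
well defined on `ZMod n` and every cyclic partial sum is a difference `F (r + k) - F r`. Hence
all partial sums starting at `r` are nonnegative exactly when `r` minimises `F`, and the
vanishing of no proper partial sum says that `F` is injective, so the minimiser is unique.
-/

open Finset

namespace ZMod

variable {n : ℕ} [NeZero n]

theorem exists_pos_lt_add_natCast_eq {r i : ZMod n} (h : r ≠ i) :
    ∃ k : ℕ, 0 < k ∧ k < n ∧ r + k = i := by
  refine ⟨(i - r).val, ?_, val_lt _, by simp⟩
  rw [Nat.pos_iff_ne_zero, Ne, val_eq_zero, sub_eq_zero]
  exact h.symm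

variable {M : Type*} [AddCommGroup M]

def cyclicPrefixSum (b : ZMod n → M) (i : ZMod n) : M :=
  ∑ j ∈ range i.val, b j

variable {b : ZMod n → M}

theorem cyclicPrefixSum_add_one (hb : ∑ j ∈ range n, b j = 0) (i : ZMod n) :
    cyclicPrefixSum b (i + 1) = cyclicPrefixSum b i + b i := by
  have hsucc : cyclicPrefixSum b i + b i = ∑ j ∈ range (i.val + 1), b j := by
    rw [cyclicPrefixSum, sum_range_succ, natCast_zmod_val]
  have hcast : i + 1 = ((i.val + 1 : ℕ) : ZMod n) := by simp
  rw [hsucc, cyclicPrefixSum, hcast]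
  obtain hlt | heq : i.val + 1 < n ∨ i.val + 1 = n := by have := val_lt i; omega
  · rw [val_cast_of_lt hlt]
  · rw [heq, natCast_self, val_zero, sum_range_zero, hb]

theorem sum_range_add_natCast (hb : ∑ j ∈ range n, b j = 0) (r : ZMod n) (k : ℕ) :
    ∑ j ∈ range k, b (r + j) = cyclicPrefixSum b (r + k) - cyclicPrefixSum b r := by
  induction k with
  | zero => simp
  | succ k ih =>
    rw [sum_range_succ, ih, Nat.cast_succ, ← add_assoc, cyclicPrefixSum_add_one hb]
    abel

theorem cyclicPrefixSum_injective (hb : ∑ j ∈ range n, b j = 0)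
    (hne : ∀ r : ZMod n, ∀ k : ℕ, 1 ≤ k → k ≤ n - 1 → ∑ j ∈ range k, b (r + j) ≠ 0) :
    Function.Injective (cyclicPrefixSum b) := by
  intro r i hri
  by_contra hne'
  obtain ⟨k, hk0, hkn, rfl⟩ := exists_pos_lt_add_natCast_eq hne'
  exact hne r k hk0 (Nat.le_sub_one_of_lt hkn) (by rw [sum_range_add_natCast hb, ← hri, sub_self])

variable [LinearOrder M] [IsOrderedAddMonoid M]

theorem sum_range_add_natCast_nonneg_iff (hb : ∑ j ∈ range n, b j = 0) (r : ZMod n) :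
    (∀ k : ℕ, 1 ≤ k → k ≤ n → 0 ≤ ∑ j ∈ range k, b (r + j)) ↔
      ∀ i, cyclicPrefixSum b r ≤ cyclicPrefixSum b i := by
  simp_rw [sum_range_add_natCast hb, sub_nonneg]
  constructor
  · intro h i
    obtain rfl | hri := eq_or_ne r i
    · rfl
    obtain ⟨k, hk0, hkn, rfl⟩ := exists_pos_lt_add_natCast_eq hri
    exact h k hk0 hkn.le
  · exact fun h k _ _ => h _

end ZMod

/-- Cycle lemma: if `b : ZMod n → ℝ` has total sum `0` and no proper cyclic partial sum
vanishes, then there is exactly one starting point `r ∈ ZMod n` from which all cyclic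
partial sums are nonnegative. -/
theorem stmt17 (n : ℕ) (hn : 1 ≤ n) (b : ZMod n → ℝ)
    (hsum : ∑ j ∈ Finset.range n, b (j : ZMod n) = 0)
    (hne : ∀ r : ZMod n, ∀ k : ℕ, 1 ≤ k → k ≤ n - 1 →
      (∑ j ∈ Finset.range k, b (r + (j : ZMod n))) ≠ 0) :
    ∃! r : ZMod n, ∀ k : ℕ, 1 ≤ k → k ≤ n →
      0 ≤ ∑ j ∈ Finset.range k, b (r + (j : ZMod n)) := by
  have : NeZero n := ⟨by omega⟩
  simp_rw [ZMod.sum_range_add_natCast_nonneg_iff hsum]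
  obtain ⟨r, hr⟩ := Finite.exists_min (ZMod.cyclicPrefixSum b)
  exact ⟨r, hr, fun i hi => ZMod.cyclicPrefixSum_injective hsum hne (le_antisymm (hi r) (hr i))⟩
end
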